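/- With the l² norm on M(2,R), the set D_0(u) = {v ∈ R² : ∃ s ∈ R, κ(u,v,s) < 1} ∪ {0} equals the open Euclidean disk of center 0 and radius |u|, for every nonzero u in R². -/

import Mathlib

open Matrix

/-- The section `Ψ : ℝ² \ {0} → SL(2,ℝ)`. -/
noncomputable def Psi (v : ℝ × ℝ) : Matrix (Fin 2) (Fin 2) ℝ :=
  !![v.1, -v.2 / (v.1 ^ 2 + v.2 ^ 2); v.2, v.1 / (v.1 ^ 2 + v.2 ^ 2)]

/-- The Frobenius (`l²`) norm on `2×2` real matrices. -/
noncomputable def frob (m : Matrix (Fin 2) (Fin 2) ℝ) : ℝ :=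
  Real.sqrt (∑ i : Fin 2, ∑ j : Fin 2, (m i j) ^ 2)

/-- The Euclidean norm on `ℝ²`. -/
noncomputable def enorm₂ (v : ℝ × ℝ) : ℝ := Real.sqrt (v.1 ^ 2 + v.2 ^ 2)

/-- `κ(u,v,s) = ‖ Ψ(v) [[1,s],[0,0]] Ψ(u)⁻¹ ‖` for the Frobenius norm. -/
noncomputable def kappa (u v : ℝ × ℝ) (s : ℝ) : ℝ :=
  frob (Psi v * !![1, s; 0, 0] * (Psi u)⁻¹)

/- `Ψ(v) [[1,s],[0,0]] Ψ(u)⁻¹` is the rank-one matrix `v wᵀ`, where `wᵀ` is the first row of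
`[[1,s],[0,0]] Ψ(u)⁻¹`, i.e. `w = (u₁/|u|² - s u₂, u₂/|u|² + s u₁)`. The cross terms cancel in
`|w|² = |u|⁻² + s² |u|²`, so `κ(u,v,s) = |v| |w| ≥ |v| / |u|`, with equality at `s = 0`. -/

lemma sq_add_sq_pos_of_ne_zero {u : ℝ × ℝ} (hu : u ≠ 0) : 0 < u.1 ^ 2 + u.2 ^ 2 := by
  obtain h | h : u.1 ≠ 0 ∨ u.2 ≠ 0 := by
    contrapose! hu
    exact Prod.ext hu.1 hu.2
  all_goals positivity

lemma enorm₂_sq (u : ℝ × ℝ) : enorm₂ u ^ 2 = u.1 ^ 2 + u.2 ^ 2 :=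
  Real.sq_sqrt (by positivity)

@[simp]
lemma enorm₂_zero : enorm₂ 0 = 0 := by
  simp [enorm₂]

lemma enorm₂_pos {u : ℝ × ℝ} (hu : u ≠ 0) : 0 < enorm₂ u :=
  Real.sqrt_pos.mpr (sq_add_sq_pos_of_ne_zero hu)

lemma Psi_inv {u : ℝ × ℝ} (hu : u ≠ 0) :
    (Psi u)⁻¹ = !![u.1 / (u.1 ^ 2 + u.2 ^ 2), u.2 / (u.1 ^ 2 + u.2 ^ 2); -u.2, u.1] := by
  have hr := (sq_add_sq_pos_of_ne_zero hu).ne'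
  refine Matrix.inv_eq_right_inv ?_
  rw [Psi, Matrix.mul_fin_two, Matrix.one_fin_two]
  ext i j
  fin_cases i <;> fin_cases j <;> simp <;> field_simp <;> ring

lemma kappa_eq {u : ℝ × ℝ} (hu : u ≠ 0) (v : ℝ × ℝ) (s : ℝ) :
    kappa u v s = enorm₂ v * Real.sqrt ((enorm₂ u ^ 2)⁻¹ + s ^ 2 * enorm₂ u ^ 2) := by
  have hr := (sq_add_sq_pos_of_ne_zero hu).ne'
  rw [enorm₂_sq, enorm₂, ← Real.sqrt_mul (by positivity), kappa, frob, Psi_inv hu, Psi,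
    Matrix.mul_fin_two, Matrix.mul_fin_two]
  congr 1
  simp only [Fin.sum_univ_two, Matrix.of_apply, Matrix.cons_val', Matrix.cons_val_zero,
    Matrix.cons_val_one, Matrix.empty_val', Matrix.cons_val_fin_one]
  field_simp
  ring

lemma kappa_zero {u : ℝ × ℝ} (hu : u ≠ 0) (v : ℝ × ℝ) : kappa u v 0 = enorm₂ v / enorm₂ u := by
  rw [kappa_eq hu, zero_pow two_ne_zero, zero_mul, add_zero, Real.sqrt_inv,
    Real.sqrt_sq (enorm₂_pos hu).le, div_eq_mul_inv]

lemma kappa_zero_le {u : ℝ × ℝ} (hu : u ≠ 0) (v : ℝ × ℝ) (s : ℝ) : kappa u v 0 ≤ kappa u v s := by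
  rw [kappa_eq hu, kappa_eq hu, zero_pow two_ne_zero, zero_mul, add_zero]
  gcongr
  · exact Real.sqrt_nonneg _
  · exact le_add_of_nonneg_right (by positivity)

lemma exists_kappa_lt_one_iff {u : ℝ × ℝ} (hu : u ≠ 0) (v : ℝ × ℝ) :
    (∃ s, kappa u v s < 1) ↔ enorm₂ v < enorm₂ u := by
  rw [← div_lt_one (enorm₂_pos hu), ← kappa_zero hu]
  exact ⟨fun ⟨s, hs⟩ => (kappa_zero_le hu v s).trans_lt hs, fun h => ⟨0, h⟩⟩

/-- For the Frobenius norm, the set `D₀(u) = {v ≠ 0 : ∃ s, κ(u,v,s) < 1} ∪ {0}`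
is the open Euclidean disk of center `0` and radius `|u|`. -/
theorem D0_eq_ball (u : ℝ × ℝ) (hu : u ≠ 0) :
    ({v : ℝ × ℝ | v ≠ 0 ∧ ∃ s : ℝ, kappa u v s < 1} ∪ {0}) =
      {v : ℝ × ℝ | enorm₂ v < enorm₂ u} := by
  ext v
  rcases eq_or_ne v 0 with rfl | hv
  · simpa using (enorm₂_pos hu)
  · simp [hv, exists_kappa_lt_one_iff hu]
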